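/- arXiv:1602.00493 — 2 statements merged into one kernel-verified Lean document; each statement's English description precedes it below -/
import Mathlib

section
/- Suppose for every n and every i_n ∈ {1,...,m_n} one has p_{i_n,n} · p_{i_n−1,n} < 0, and that the limits lim_n Π_{k≤n} (p_{0,k}/q_{0,k}) and lim_n Π_{k≤n} (p_{m_k,k}/q_{m_k,k}) are not both 0. Then F has neither a finite nor an infinite derivative at any nega-Q̃-rational point of [0,1]. -/
/-!
After flipping the digits at even positions, the nega-`Q̃`-expansion becomes the ordinary
`Q̃`-expansion, and a nega-`Q̃`-rational point `x₀` becomes a `Q̃`-rational one: it has an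
expansion `c` ending in maximal digits and a terminating expansion `e = roundUp c n`.
Appending a digit `1` to `e` approaches `x₀` from the right and truncating `c` approaches it
from the left; along both sequences the difference quotient of `F` is a ratio of cylinder
products `∏ p / ∏ q`. The two products differ only at position `n`, where
`p_{e_n,n} p_{e_n-1,n} < 0`, so the quotients have opposite signs. Hence there is no infinite
derivative, and a finite one must vanish; but then both `∏ p_{0,k}/q_{0,k}` and
`∏ p_{m_k,k}/q_{m_k,k}` tend to `0`.
-/

open Finset Filter Topology MeasureTheory

noncomputable section

/-- `rowSum p n k = Σ_{i<k} p_{i,n}` (the numbers `β_{k,n}`). -/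
def rowSum (p : ℕ → ℕ → ℝ) (n k : ℕ) : ℝ := ∑ i ∈ Finset.range k, p n i

/-- Index flip at even positions: `tw m f n i = f n i` for odd `n`, `f n (m n - i)` for even `n`. -/
def tw (m : ℕ → ℕ) (f : ℕ → ℕ → ℝ) (n i : ℕ) : ℝ :=
  if Odd n then f n i else f n (m n - i)

/-- Tail value of the (nega-)expansion determined by `f` from position `k+1` on. -/
def negaShift (m : ℕ → ℕ) (f : ℕ → ℕ → ℝ) (d : ℕ → ℕ) (k : ℕ) : ℝ :=
  ∑' j : ℕ, tw m (rowSum f) (k + j + 1) (d (k + j + 1)) *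
    ∏ t ∈ Finset.Icc (k + 1) (k + j), tw m f t (d t)

/-- The nega-expansion value: `negaVal m f d = β̃_{d₁,1} + Σ_{k≥2} β̃_{d_k,k} Π_{j<k} f̃_{d_j,j}`. -/
def negaVal (m : ℕ → ℕ) (f : ℕ → ℕ → ℝ) (d : ℕ → ℕ) : ℝ := negaShift m f d 0

/-- A digit sequence for the alphabet sizes `m`. -/
def ValidDigits (m : ℕ → ℕ) (d : ℕ → ℕ) : Prop := ∀ n, d n ≤ m n

namespace NegaQ

def flipEven (m d : ℕ → ℕ) (t : ℕ) : ℕ := if Odd t then d t else m t - d t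

def digitProd (f : ℕ → ℕ → ℝ) (e : ℕ → ℕ) (K : ℕ) : ℝ := ∏ t ∈ Icc 1 K, f t (e t)

def qTerm (f : ℕ → ℕ → ℝ) (e : ℕ → ℕ) (j : ℕ) : ℝ :=
  rowSum f (j + 1) (e (j + 1)) * digitProd f e j

def qPartial (f : ℕ → ℕ → ℝ) (e : ℕ → ℕ) (K : ℕ) : ℝ := ∑ j ∈ range K, qTerm f e j

/-- The `Q̃`-expansion `β_{e₁,1} + Σ_{k≥2} β_{e_k,k} ∏_{j<k} f_{e_j,j}`; on digits `e`, `F` maps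
`qVal q e` to `qVal p e`. -/
def qVal (f : ℕ → ℕ → ℝ) (e : ℕ → ℕ) : ℝ := ∑' j, qTerm f e j

/-- `(c₁ … cₙ m m …)` and `(c₁ … cₙ₋₁ (cₙ+1) 0 0 …)` are the two expansions of a
`Q̃`-rational point. -/
def roundUp (c : ℕ → ℕ) (n t : ℕ) : ℕ := if t < n then c t else if t = n then c n + 1 else 0

def truncate (c : ℕ → ℕ) (K t : ℕ) : ℕ := if t ≤ K then c t else 0

section Digits

variable {m d e c : ℕ → ℕ} {n t : ℕ}

lemma flipEven_flipEven (hd : ValidDigits m d) : flipEven m (flipEven m d) = d := by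
  funext t
  by_cases ht : Odd t <;> simp [flipEven, ht, Nat.sub_sub_self (hd t)]

lemma validDigits_flipEven (hd : ValidDigits m d) : ValidDigits m (flipEven m d) := fun t => by
  unfold flipEven
  split_ifs
  exacts [hd t, Nat.sub_le _ _]

lemma tw_flipEven (f : ℕ → ℕ → ℝ) (he : ValidDigits m e) (t : ℕ) :
    tw m f t (flipEven m e t) = f t (e t) := by
  by_cases ht : Odd t <;> simp [tw, flipEven, ht, Nat.sub_sub_self (he t)]

lemma negaVal_flipEven (f : ℕ → ℕ → ℝ) (he : ValidDigits m e) :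
    negaVal m f (flipEven m e) = qVal f e := by
  refine tsum_congr fun j => ?_
  simp only [zero_add, tw_flipEven _ he, qTerm, digitProd]

lemma flipEven_of_alternatingTail
    (htail : ∀ k, n < k → d k = if Odd (k - n) then m k else 0) (ht : n < t) :
    flipEven m d t = if Odd n then 0 else m t := by
  have hpar := Nat.odd_sub ht.le
  rw [flipEven, htail t ht]
  by_cases h1 : Odd t <;> by_cases h2 : Odd n <;>
    simp [hpar, h1, h2, ← Nat.not_odd_iff_even]

lemma roundUp_of_lt (ht : t < n) : roundUp c n t = c t := if_pos ht

lemma roundUp_self : roundUp c n n = c n + 1 := by simp [roundUp]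

lemma roundUp_of_gt (ht : n < t) : roundUp c n t = 0 := by
  simp [roundUp, not_lt.2 ht.le, ht.ne']

lemma validDigits_roundUp (hc : ValidDigits m c) (hcn : c n < m n) :
    ValidDigits m (roundUp c n) := fun t => by
  rcases lt_trichotomy t n with ht | rfl | ht
  · rw [roundUp_of_lt ht]; exact hc t
  · rw [roundUp_self]; exact hcn
  · rw [roundUp_of_gt ht]; exact Nat.zero_le _

lemma validDigits_truncate (hc : ValidDigits m c) (K : ℕ) : ValidDigits m (truncate c K) :=
  fun t => by
    unfold truncate
    split_ifs
    exacts [hc t, Nat.zero_le _]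

end Digits

section Expansion

variable {f : ℕ → ℕ → ℝ} {e e' c : ℕ → ℕ} {m : ℕ → ℕ} {n K M : ℕ}

lemma qPartial_succ : qPartial f e (K + 1) = qPartial f e K + qTerm f e K :=
  sum_range_succ _ _

lemma qPartial_succ_add_digitProd :
    qPartial f e (K + 1) + digitProd f e (K + 1) =
      qPartial f e K + rowSum f (K + 1) (e (K + 1) + 1) * digitProd f e K := by
  simp only [qPartial_succ, qTerm, digitProd, prod_Icc_succ_top (Nat.le_add_left 1 K), rowSum,
    sum_range_succ]
  ring

lemma digitProd_congr (h : ∀ t ≤ K, e t = e' t) : digitProd f e K = digitProd f e' K :=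
  prod_congr rfl fun t ht => by rw [h t (mem_Icc.1 ht).2]

lemma qPartial_congr (h : ∀ t ≤ K, e t = e' t) : qPartial f e K = qPartial f e' K :=
  sum_congr rfl fun j hj => by
    have hj : j + 1 ≤ K := mem_range.1 hj
    rw [qTerm, qTerm, h _ hj, digitProd_congr fun t ht => h t (by omega)]

lemma qVal_eq_qPartial (h : ∀ t, K < t → e t = 0) : qVal f e = qPartial f e K :=
  tsum_eq_sum fun j hj => by
    simp [qTerm, rowSum, h (j + 1) (by simp at hj; omega)]

lemma qVal_truncate : qVal f (truncate c K) = qPartial f c K := by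
  rw [qVal_eq_qPartial (e := truncate c K) fun t ht => if_neg (not_le.2 ht)]
  exact qPartial_congr fun t ht => if_pos ht

lemma qVal_update_succ (h : ∀ t, M < t → e t = 0) :
    qVal f (Function.update e (M + 1) 1) = qVal f e + digitProd f e (M + 1) := by
  have hbelow : ∀ t ≤ M, Function.update e (M + 1) 1 t = e t :=
    fun t ht => Function.update_of_ne (by omega) _ _
  rw [qVal_eq_qPartial (K := M + 1) fun t ht => by rw [Function.update_of_ne (by omega),
      h t (by omega)], qVal_eq_qPartial h, qPartial_succ, qTerm, Function.update_self,
    qPartial_congr hbelow, digitProd_congr hbelow, digitProd, digitProd,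
    prod_Icc_succ_top (Nat.le_add_left 1 M), h (M + 1) (by omega)]
  rw [rowSum, sum_range_one, mul_comm]

/-- Appending a maximal digit `m_{K+1}` does not change `qPartial + digitProd`, since the
row sums are `1`. -/
lemma qPartial_add_digitProd_of_maxTail (hf : ∀ s, ∑ i ∈ range (m s + 1), f s i = 1)
    (htail : ∀ t, n < t → c t = m t) (hn : 1 ≤ n) (hK : n ≤ K) :
    qPartial f c K + digitProd f c K = qPartial f (roundUp c n) n := by
  induction K, hK using Nat.le_induction with
  | base =>
    obtain ⟨k, rfl⟩ : ∃ k, n = k + 1 := ⟨n - 1, by omega⟩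
    have hbelow : ∀ t ≤ k, c t = roundUp c (k + 1) t :=
      fun t ht => (roundUp_of_lt (by omega)).symm
    rw [qPartial_succ_add_digitProd, qPartial_succ, qTerm, roundUp_self, qPartial_congr hbelow,
      digitProd_congr hbelow]
  | succ K hK ih =>
    have hrow : rowSum f (K + 1) (m (K + 1) + 1) = 1 := hf (K + 1)
    rw [← ih, qPartial_succ_add_digitProd, htail (K + 1) (by omega), hrow, one_mul]

lemma qVal_truncate_of_maxTail (hf : ∀ s, ∑ i ∈ range (m s + 1), f s i = 1)
    (htail : ∀ t, n < t → c t = m t) (hn : 1 ≤ n) (hK : n ≤ K) :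
    qVal f (truncate c K) = qVal f (roundUp c n) - digitProd f c K := by
  rw [qVal_truncate, qVal_eq_qPartial fun t => roundUp_of_gt,
    ← qPartial_add_digitProd_of_maxTail hf htail hn hK]
  ring

end Expansion

section Positive

variable {m : ℕ → ℕ} {q : ℕ → ℕ → ℝ} {e c : ℕ → ℕ} {n K : ℕ}

lemma digitProd_pos (hq1 : ∀ n i, i ≤ m n → 0 < q n i) (he : ValidDigits m e) (K : ℕ) :
    0 < digitProd q e K :=
  prod_pos fun t _ => hq1 t (e t) (he t)

lemma rowSum_nonneg (hq1 : ∀ n i, i ≤ m n → 0 < q n i) {s k : ℕ} (hk : k ≤ m s + 1) :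
    0 ≤ rowSum q s k :=
  sum_nonneg fun i hi => (hq1 s i (by have := mem_range.1 hi; omega)).le

lemma rowSum_le_one (hq1 : ∀ n i, i ≤ m n → 0 < q n i)
    (hq2 : ∀ n, ∑ i ∈ range (m n + 1), q n i = 1) {s k : ℕ} (hk : k ≤ m s + 1) :
    rowSum q s k ≤ 1 :=
  hq2 s ▸ sum_le_sum_of_subset_of_nonneg (range_subset_range.2 hk)
    fun i hi _ => (hq1 s i (by have := mem_range.1 hi; omega)).le

lemma qTerm_nonneg (hq1 : ∀ n i, i ≤ m n → 0 < q n i) (he : ValidDigits m e) (j : ℕ) :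
    0 ≤ qTerm q e j :=
  mul_nonneg (rowSum_nonneg hq1 (by have := he (j + 1); omega)) (digitProd_pos hq1 he j).le

lemma qPartial_add_digitProd_le_one (hq1 : ∀ n i, i ≤ m n → 0 < q n i)
    (hq2 : ∀ n, ∑ i ∈ range (m n + 1), q n i = 1) (he : ValidDigits m e) :
    ∀ K, qPartial q e K + digitProd q e K ≤ 1
  | 0 => by simp [qPartial, digitProd]
  | K + 1 => by
    rw [qPartial_succ_add_digitProd]
    have := mul_le_of_le_one_left (digitProd_pos hq1 he K).le
      (rowSum_le_one hq1 hq2 (s := K + 1) (k := e (K + 1) + 1) (by have := he (K + 1); omega))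
    linarith [qPartial_add_digitProd_le_one hq1 hq2 he K]

lemma qVal_mem_Icc (hq1 : ∀ n i, i ≤ m n → 0 < q n i)
    (hq2 : ∀ n, ∑ i ∈ range (m n + 1), q n i = 1) (he : ValidDigits m e)
    (h : ∀ t, K < t → e t = 0) : qVal q e ∈ Set.Icc 0 1 := by
  rw [qVal_eq_qPartial h]
  exact ⟨sum_nonneg fun j _ => qTerm_nonneg hq1 he j,
    by linarith [qPartial_add_digitProd_le_one hq1 hq2 he K, digitProd_pos hq1 he K]⟩

lemma qVal_eq_qVal_roundUp (hq1 : ∀ n i, i ≤ m n → 0 < q n i)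
    (hq2 : ∀ n, ∑ i ∈ range (m n + 1), q n i = 1)
    (hq4 : ∀ d, ValidDigits m d → Tendsto (fun N => ∏ j ∈ Icc 1 N, q j (d j)) atTop (𝓝 0))
    (hc : ValidDigits m c) (hn : 1 ≤ n) (htail : ∀ t, n < t → c t = m t) :
    qVal q c = qVal q (roundUp c n) := by
  have hlim : Tendsto (fun K => qPartial q c K) atTop (𝓝 (qVal q (roundUp c n))) := by
    have h := (tendsto_const_nhds (x := qVal q (roundUp c n))).sub (hq4 c hc)
    rw [sub_zero] at h
    refine h.congr' ?_
    filter_upwards [eventually_ge_atTop n] with K hK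
    rw [← qVal_truncate, qVal_truncate_of_maxTail hq2 htail hn hK, digitProd]
  exact ((hasSum_iff_tendsto_nat_of_nonneg (qTerm_nonneg hq1 hc) _).2 hlim).tsum_eq

end Positive

lemma exists_maxTail_of_alternatingTail {m : ℕ → ℕ} {q : ℕ → ℕ → ℝ}
    (hq1 : ∀ n i, i ≤ m n → 0 < q n i)
    (hq2 : ∀ n, ∑ i ∈ range (m n + 1), q n i = 1)
    (hq4 : ∀ d, ValidDigits m d → Tendsto (fun N => ∏ j ∈ Icc 1 N, q j (d j)) atTop (𝓝 0))
    {d : ℕ → ℕ} (hd : ValidDigits m d) {n : ℕ} (hn : 1 ≤ n) (hdn : d n ≠ 0)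
    (htail : ∀ k, n < k → d k = if Odd (k - n) then m k else 0) :
    ∃ c, ValidDigits m c ∧ c n < m n ∧ (∀ t, n < t → c t = m t) ∧
      negaVal m q d = qVal q (roundUp c n) := by
  have hflip : ∀ t, n < t → flipEven m d t = if Odd n then 0 else m t :=
    fun t => flipEven_of_alternatingTail htail
  have hx : negaVal m q d = qVal q (flipEven m d) := by
    conv_lhs => rw [← flipEven_flipEven hd]
    exact negaVal_flipEven q (validDigits_flipEven hd)
  have hdn' := hd n
  by_cases hodd : Odd n
  · refine ⟨fun t => if t < n then flipEven m d t else if t = n then d n - 1 else m t,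
      fun t => ?_, ?_, fun t ht => by simp [not_lt.2 ht.le, ht.ne'], ?_⟩
    · dsimp only
      split_ifs with h1 h2
      · exact validDigits_flipEven hd t
      · subst h2; omega
      · exact le_rfl
    · simp
      omega
    · rw [hx]
      congr 1
      funext t
      rcases lt_trichotomy t n with ht | rfl | ht
      · simp [roundUp_of_lt ht, ht]
      · simp [roundUp_self, flipEven, hodd]; omega
      · rw [roundUp_of_gt ht, hflip t ht, if_pos hodd]
  · have hmax := fun t (ht : n < t) => (hflip t ht).trans (if_neg hodd)
    refine ⟨flipEven m d, validDigits_flipEven hd, by simp [flipEven, hodd]; omega, hmax,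
      hx.trans (qVal_eq_qVal_roundUp hq1 hq2 hq4 (validDigits_flipEven hd) hn hmax)⟩

lemma tendsto_nhdsWithin_diff_of_add {x₀ : ℝ} {s : Set ℝ} {y δ : ℕ → ℝ}
    (hδ : Tendsto δ atTop (𝓝 0)) (hy : ∀ᶠ M in atTop, y M = x₀ + δ M ∧ δ M ≠ 0 ∧ y M ∈ s) :
    Tendsto y atTop (𝓝[s \ {x₀}] x₀) := by
  refine tendsto_nhdsWithin_iff.2 ⟨?_, hy.mono fun M ⟨h, hδM, hs⟩ => ⟨hs, by simp [h, hδM]⟩⟩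
  have h := (tendsto_const_nhds (x := x₀)).add hδ
  rw [add_zero] at h
  exact h.congr' (hy.mono fun M h => h.1.symm)

section Approach

variable {m : ℕ → ℕ} {q p : ℕ → ℕ → ℝ} {G : ℝ → ℝ} {n : ℕ}

lemma exists_tendsto_slope_eq_right (hq1 : ∀ n i, i ≤ m n → 0 < q n i)
    (hq2 : ∀ n, ∑ i ∈ range (m n + 1), q n i = 1)
    (hq4 : ∀ d, ValidDigits m d → Tendsto (fun N => ∏ j ∈ Icc 1 N, q j (d j)) atTop (𝓝 0))
    (hG : ∀ s, ValidDigits m s → G (qVal q s) = qVal p s) (hm : ∀ t, 1 ≤ m t)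
    {e : ℕ → ℕ} (he : ValidDigits m e) (hen : ∀ t, n < t → e t = 0) :
    ∃ y : ℕ → ℝ, Tendsto y atTop (𝓝[Set.Icc 0 1 \ {qVal q e}] (qVal q e)) ∧
      ∀ M, n ≤ M → slope G (qVal q e) (y M) = digitProd p e (M + 1) / digitProd q e (M + 1) := by
  have hvalid : ∀ M, ValidDigits m (Function.update e (M + 1) 1) := fun M t => by
    rcases eq_or_ne t (M + 1) with rfl | ht
    · simpa using hm (M + 1)
    · simpa [Function.update_of_ne ht] using he t
  have hval : ∀ f M, n ≤ M →
      qVal f (Function.update e (M + 1) 1) = qVal f e + digitProd f e (M + 1) :=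
    fun f M hM => qVal_update_succ fun t ht => hen t (by omega)
  refine ⟨fun M => qVal q (Function.update e (M + 1) 1),
    tendsto_nhdsWithin_diff_of_add ((hq4 e he).comp (tendsto_add_atTop_nat 1)) ?_,
    fun M hM => ?_⟩
  · filter_upwards [eventually_ge_atTop n] with M hM
    refine ⟨hval q M hM, (digitProd_pos hq1 he _).ne',
      qVal_mem_Icc hq1 hq2 (hvalid M) (K := M + 1) fun t ht => ?_⟩
    rw [Function.update_of_ne (by omega), hen t (by omega)]
  · rw [slope_def_field]
    dsimp only
    rw [hG _ (hvalid M), hG _ he, hval q M hM, hval p M hM,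
      add_sub_cancel_left, add_sub_cancel_left]

lemma exists_tendsto_slope_eq_left (hq1 : ∀ n i, i ≤ m n → 0 < q n i)
    (hq2 : ∀ n, ∑ i ∈ range (m n + 1), q n i = 1)
    (hq4 : ∀ d, ValidDigits m d → Tendsto (fun N => ∏ j ∈ Icc 1 N, q j (d j)) atTop (𝓝 0))
    (hG : ∀ s, ValidDigits m s → G (qVal q s) = qVal p s)
    (hp2 : ∀ n, ∑ i ∈ range (m n + 1), p n i = 1)
    {c : ℕ → ℕ} (hc : ValidDigits m c) (hcn : c n < m n) (hn : 1 ≤ n)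
    (htail : ∀ t, n < t → c t = m t) :
    ∃ z : ℕ → ℝ, Tendsto z atTop
        (𝓝[Set.Icc 0 1 \ {qVal q (roundUp c n)}] (qVal q (roundUp c n))) ∧
      ∀ M, n ≤ M → slope G (qVal q (roundUp c n)) (z M) =
        digitProd p c (M + 1) / digitProd q c (M + 1) := by
  have hround := validDigits_roundUp hc hcn
  have hval : ∀ f : ℕ → ℕ → ℝ, (∀ s, ∑ i ∈ range (m s + 1), f s i = 1) → ∀ M, n ≤ M →
      qVal f (truncate c (M + 1)) = qVal f (roundUp c n) + -digitProd f c (M + 1) :=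
    fun f hf M hM => by rw [qVal_truncate_of_maxTail hf htail hn (by omega), sub_eq_add_neg]
  refine ⟨fun M => qVal q (truncate c (M + 1)),
    tendsto_nhdsWithin_diff_of_add (neg_zero (G := ℝ) ▸
      ((hq4 c hc).comp (tendsto_add_atTop_nat 1)).neg) ?_, fun M hM => ?_⟩
  · filter_upwards [eventually_ge_atTop n] with M hM
    exact ⟨hval q hq2 M hM, neg_ne_zero.2 (digitProd_pos hq1 hc _).ne',
      qVal_mem_Icc hq1 hq2 (validDigits_truncate hc _) fun t ht => if_neg (not_le.2 ht)⟩
  · rw [slope_def_field]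
    dsimp only
    rw [hG _ (validDigits_truncate hc _), hG _ hround, hval q hq2 M hM, hval p hp2 M hM,
      add_sub_cancel_left, add_sub_cancel_left, neg_div_neg_eq]

end Approach

section Signs

variable {m : ℕ → ℕ} {p : ℕ → ℕ → ℝ}

lemma one_le_of_entry_lt_one (hp1 : ∀ n i, i ≤ m n → p n i ∈ Set.Ioo (-1 : ℝ) 1)
    (hp2 : ∀ n, ∑ i ∈ range (m n + 1), p n i = 1) (t : ℕ) : 1 ≤ m t := by
  by_contra h
  have h0 : m t = 0 := by omega
  have hrow := hp2 t
  rw [h0, zero_add, sum_range_one] at hrow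
  linarith [(hp1 t 0 (Nat.zero_le _)).2]

lemma entry_zero_pos (hm : ∀ t, 1 ≤ m t)
    (hp3 : ∀ n k, 1 ≤ k → k ≤ m n → rowSum p n k ∈ Set.Ioo (0 : ℝ) 1) (t : ℕ) : 0 < p t 0 := by
  simpa [rowSum] using (hp3 t 1 le_rfl (hm t)).1

lemma entry_last_pos (hm : ∀ t, 1 ≤ m t) (hp2 : ∀ n, ∑ i ∈ range (m n + 1), p n i = 1)
    (hp3 : ∀ n k, 1 ≤ k → k ≤ m n → rowSum p n k ∈ Set.Ioo (0 : ℝ) 1) (t : ℕ) :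
    0 < p t (m t) := by
  have hlt := (hp3 t (m t) (hm t) le_rfl).2
  have hrow := hp2 t
  rw [sum_range_succ] at hrow
  rw [rowSum] at hlt
  linarith

lemma entry_ne_zero (hp0 : ∀ t, 0 < p t 0)
    (halt : ∀ n i, 1 ≤ i → i ≤ m n → p n i * p n (i - 1) < 0) {t i : ℕ} (hi : i ≤ m t) :
    p t i ≠ 0 := by
  rcases i with _ | i
  · exact (hp0 t).ne'
  · intro h
    simpa [h] using halt t (i + 1) (by omega) hi

lemma prod_neg_of_unique_neg {ι R : Type*} [CommRing R] [LinearOrder R] [IsStrictOrderedRing R]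
    [DecidableEq ι] {s : Finset ι} {f : ι → R} {j : ι} (hj : j ∈ s) (hfj : f j < 0)
    (hf : ∀ t ∈ s, t ≠ j → 0 < f t) : ∏ t ∈ s, f t < 0 := by
  rw [← mul_prod_erase s f hj]
  exact mul_neg_of_neg_of_pos hfj
    (prod_pos fun t ht => hf t (mem_of_mem_erase ht) (ne_of_mem_erase ht))

lemma digitProd_roundUp_mul_digitProd_neg (hp0 : ∀ t, 0 < p t 0) (hpm : ∀ t, 0 < p t (m t))
    (halt : ∀ n i, 1 ≤ i → i ≤ m n → p n i * p n (i - 1) < 0)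
    {c : ℕ → ℕ} {n K : ℕ} (hc : ValidDigits m c) (hcn : c n < m n)
    (htail : ∀ t, n < t → c t = m t) (hn : 1 ≤ n) (hK : n ≤ K) :
    digitProd p (roundUp c n) K * digitProd p c K < 0 := by
  rw [digitProd, digitProd, ← prod_mul_distrib]
  refine prod_neg_of_unique_neg (mem_Icc.2 ⟨hn, hK⟩) ?_ fun t _ htn => ?_
  · simpa [roundUp_self] using halt n (c n + 1) (by omega) hcn
  · rcases htn.lt_or_gt with ht | ht
    · rw [roundUp_of_lt ht]
      exact mul_self_pos.2 (entry_ne_zero hp0 halt (hc t))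
    · rw [roundUp_of_gt ht, htail t ht]
      exact mul_pos (hp0 t) (hpm t)

end Signs

lemma prod_Icc_one_mul_prod_Icc {M : Type*} [CommMonoid M] (f : ℕ → M) {n K : ℕ}
    (h : n ≤ K) : (∏ t ∈ Icc 1 n, f t) * ∏ t ∈ Icc (n + 1) K, f t = ∏ t ∈ Icc 1 K, f t := by
  have := prod_Ioc_consecutive f (Nat.zero_le n) h
  rwa [← Icc_add_one_left_eq_Ioc, ← Icc_add_one_left_eq_Ioc, ← Icc_add_one_left_eq_Ioc,
    zero_add] at this

lemma tendsto_prod_Icc_zero_of_eq_of_lt {g h : ℕ → ℝ} {n : ℕ} (hgh : ∀ t, n < t → g t = h t)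
    (hg : ∏ t ∈ Icc 1 n, g t ≠ 0)
    (hlim : Tendsto (fun K => ∏ t ∈ Icc 1 K, g t) atTop (𝓝 0)) :
    Tendsto (fun K => ∏ t ∈ Icc 1 K, h t) atTop (𝓝 0) := by
  have hc := hlim.const_mul ((∏ t ∈ Icc 1 n, h t) / ∏ t ∈ Icc 1 n, g t)
  rw [mul_zero] at hc
  refine hc.congr' ?_
  filter_upwards [eventually_ge_atTop n] with K hK
  rw [← prod_Icc_one_mul_prod_Icc g hK, ← prod_Icc_one_mul_prod_Icc h hK,
    prod_congr (s₁ := Icc (n + 1) K) rfl fun t ht => hgh t (by have := (mem_Icc.1 ht).1; omega)]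
  field_simp

lemma tendsto_prod_div_zero_of_tail {m : ℕ → ℕ} {q p : ℕ → ℕ → ℝ}
    (hq1 : ∀ n i, i ≤ m n → 0 < q n i) (hp0 : ∀ t, 0 < p t 0)
    (halt : ∀ n i, 1 ≤ i → i ≤ m n → p n i * p n (i - 1) < 0)
    {s : ℕ → ℕ} (hs : ValidDigits m s) (i : ℕ → ℕ) {n : ℕ} (hsi : ∀ t, n < t → s t = i t)
    (hlim : Tendsto (fun M => digitProd p s (M + 1) / digitProd q s (M + 1)) atTop (𝓝 0)) :
    Tendsto (fun N => ∏ k ∈ Icc 1 N, p k (i k) / q k (i k)) atTop (𝓝 0) := by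
  refine tendsto_prod_Icc_zero_of_eq_of_lt (g := fun t => p t (s t) / q t (s t)) (n := n)
    (fun t ht => by simp only [hsi t ht])
    (prod_ne_zero_iff.2 fun t _ =>
      div_ne_zero (entry_ne_zero hp0 halt (hs t)) (hq1 t _ (hs t)).ne') ?_
  rw [← tendsto_add_atTop_iff_nat 1]
  simpa only [digitProd, prod_div_distrib] using hlim

section OppositeSigns

variable {α : Type*} {l : Filter α} [l.NeBot] {u v : α → ℝ}

lemma eq_zero_of_tendsto_of_mul_neg {L : ℝ} (huv : ∀ᶠ k in l, u k * v k < 0)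
    (hu : Tendsto u l (𝓝 L)) (hv : Tendsto v l (𝓝 L)) : L = 0 :=
  mul_self_eq_zero.1 <| le_antisymm (le_of_tendsto (hu.mul hv) (huv.mono fun _ h => h.le))
    (mul_self_nonneg L)

lemma not_tendsto_atTop_of_mul_neg (huv : ∀ᶠ k in l, u k * v k < 0)
    (hu : Tendsto u l atTop) : ¬ Tendsto v l atTop := fun hv =>
  let ⟨_, hu0, hv0, hneg⟩ :=
    ((hu.eventually_gt_atTop 0).and ((hv.eventually_gt_atTop 0).and huv)).exists
  lt_asymm hneg (mul_pos hu0 hv0)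

lemma not_tendsto_atBot_of_mul_neg (huv : ∀ᶠ k in l, u k * v k < 0)
    (hu : Tendsto u l atBot) : ¬ Tendsto v l atBot := fun hv =>
  let ⟨_, hu0, hv0, hneg⟩ :=
    ((hu.eventually_lt_atBot 0).and ((hv.eventually_lt_atBot 0).and huv)).exists
  lt_asymm hneg (mul_pos_of_neg_of_neg hu0 hv0)

end OppositeSigns

end NegaQ

open NegaQ

theorem stmt14_general (m : ℕ → ℕ) (q p : ℕ → ℕ → ℝ)
    (hq1 : ∀ n i, i ≤ m n → 0 < q n i)
    (hq2 : ∀ n, ∑ i ∈ Finset.range (m n + 1), q n i = 1)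
    (hq4 : ∀ d, ValidDigits m d →
      Tendsto (fun N => ∏ j ∈ Finset.Icc 1 N, q j (d j)) atTop (𝓝 0))
    (hp1 : ∀ n i, i ≤ m n → p n i ∈ Set.Ioo (-1 : ℝ) 1)
    (hp2 : ∀ n, ∑ i ∈ Finset.range (m n + 1), p n i = 1)
    (hp3 : ∀ n k, 1 ≤ k → k ≤ m n → rowSum p n k ∈ Set.Ioo (0 : ℝ) 1)
    (halt : ∀ n i, 1 ≤ i → i ≤ m n → p n i * p n (i - 1) < 0)
    (hlim : ¬ (Tendsto (fun N => ∏ k ∈ Finset.Icc 1 N, p k 0 / q k 0) atTop (𝓝 0) ∧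
      Tendsto (fun N => ∏ k ∈ Finset.Icc 1 N, p k (m k) / q k (m k)) atTop (𝓝 0)))
    (G : ℝ → ℝ)
    (hG : ∀ d, ValidDigits m d → G (negaVal m q d) = negaVal m p d)
    -- a nega-`Q̃`-rational point `x₀`
    (d : ℕ → ℕ) (hd : ValidDigits m d) (n : ℕ) (hn : 1 ≤ n) (hdn : d n ≠ 0)
    (htail : ∀ k, n < k → d k = if Odd (k - n) then m k else 0) :
    (¬ ∃ L : ℝ,
      Tendsto (fun y => (G y - G (negaVal m q d)) / (y - negaVal m q d))
        (𝓝[Set.Icc (0 : ℝ) 1 \ {negaVal m q d}] (negaVal m q d)) (𝓝 L)) ∧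
    ¬ Tendsto (fun y => (G y - G (negaVal m q d)) / (y - negaVal m q d))
        (𝓝[Set.Icc (0 : ℝ) 1 \ {negaVal m q d}] (negaVal m q d)) atTop ∧
    ¬ Tendsto (fun y => (G y - G (negaVal m q d)) / (y - negaVal m q d))
        (𝓝[Set.Icc (0 : ℝ) 1 \ {negaVal m q d}] (negaVal m q d)) atBot := by
  have hm := one_le_of_entry_lt_one hp1 hp2
  have hp0 := entry_zero_pos hm hp3
  have hGq : ∀ s, ValidDigits m s → G (qVal q s) = qVal p s := fun s hs => by
    simpa only [negaVal_flipEven _ hs] using hG _ (validDigits_flipEven hs)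
  obtain ⟨c, hc, hcn, hctail, hx₀⟩ := exists_maxTail_of_alternatingTail hq1 hq2 hq4 hd hn hdn htail
  have he := validDigits_roundUp hc hcn
  obtain ⟨y, hy, hyG⟩ := exists_tendsto_slope_eq_right hq1 hq2 hq4 hGq hm he fun _ => roundUp_of_gt
  obtain ⟨z, hz, hzG⟩ := exists_tendsto_slope_eq_left hq1 hq2 hq4 hGq hp2 hc hcn hn hctail
  have hyz : ∀ᶠ M in atTop, slope G (qVal q (roundUp c n)) (y M) *
      slope G (qVal q (roundUp c n)) (z M) < 0 := by
    filter_upwards [eventually_ge_atTop n] with M hM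
    rw [hyG M hM, hzG M hM, div_mul_div_comm]
    exact div_neg_of_neg_of_pos (digitProd_roundUp_mul_digitProd_neg hp0
      (entry_last_pos hm hp2 hp3) halt hc hcn hctail hn (by omega))
      (mul_pos (digitProd_pos hq1 he _) (digitProd_pos hq1 hc _))
  simp_rw [hx₀, ← slope_def_field]
  refine ⟨fun ⟨L, hL⟩ => ?_, fun hL => not_tendsto_atTop_of_mul_neg hyz (hL.comp hy) (hL.comp hz),
    fun hL => not_tendsto_atBot_of_mul_neg hyz (hL.comp hy) (hL.comp hz)⟩
  obtain rfl := eq_zero_of_tendsto_of_mul_neg hyz (hL.comp hy) (hL.comp hz)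
  exact hlim ⟨tendsto_prod_div_zero_of_tail hq1 hp0 halt he (fun _ => 0) (fun _ => roundUp_of_gt)
      ((hL.comp hy).congr' ((eventually_ge_atTop n).mono hyG)),
    tendsto_prod_div_zero_of_tail hq1 hp0 halt hc m hctail
      ((hL.comp hz).congr' ((eventually_ge_atTop n).mono hzG))⟩

/-- under the sign-alternation condition `p_{i,n}·p_{i−1,n} < 0` and the
non-vanishing of at least one of the two limit products, `F` has neither a finite nor an
infinite derivative at any nega-`Q̃`-rational point. -/
theorem stmt14 (m : ℕ → ℕ) (q p : ℕ → ℕ → ℝ)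
    (hq1 : ∀ n i, i ≤ m n → 0 < q n i)
    (hq2 : ∀ n, ∑ i ∈ Finset.range (m n + 1), q n i = 1)
    (hq4 : ∀ d, ValidDigits m d →
      Tendsto (fun N => ∏ j ∈ Finset.Icc 1 N, q j (d j)) atTop (𝓝 0))
    (hp1 : ∀ n i, i ≤ m n → p n i ∈ Set.Ioo (-1 : ℝ) 1)
    (hp2 : ∀ n, ∑ i ∈ Finset.range (m n + 1), p n i = 1)
    (hp3 : ∀ n k, 1 ≤ k → k ≤ m n → rowSum p n k ∈ Set.Ioo (0 : ℝ) 1)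
    (hp4 : ∀ d, ValidDigits m d →
      Tendsto (fun N => ∏ j ∈ Finset.Icc 1 N, |p j (d j)|) atTop (𝓝 0))
    (halt : ∀ n i, 1 ≤ i → i ≤ m n → p n i * p n (i - 1) < 0)
    (hlim : ¬ (Tendsto (fun N => ∏ k ∈ Finset.Icc 1 N, p k 0 / q k 0) atTop (𝓝 0) ∧
      Tendsto (fun N => ∏ k ∈ Finset.Icc 1 N, p k (m k) / q k (m k)) atTop (𝓝 0)))
    (G : ℝ → ℝ)
    (hG : ∀ d, ValidDigits m d → G (negaVal m q d) = negaVal m p d)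
    (hsurj : ∀ x ∈ Set.Icc (0 : ℝ) 1, ∃ d, ValidDigits m d ∧ x = negaVal m q d)
    -- a nega-`Q̃`-rational point `x₀`
    (d : ℕ → ℕ) (hd : ValidDigits m d) (n : ℕ) (hn : 1 ≤ n) (hdn : d n ≠ 0)
    (htail : ∀ k, n < k → d k = if Odd (k - n) then m k else 0) :
    (¬ ∃ L : ℝ,
      Tendsto (fun y => (G y - G (negaVal m q d)) / (y - negaVal m q d))
        (𝓝[Set.Icc (0 : ℝ) 1 \ {negaVal m q d}] (negaVal m q d)) (𝓝 L)) ∧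
    ¬ Tendsto (fun y => (G y - G (negaVal m q d)) / (y - negaVal m q d))
        (𝓝[Set.Icc (0 : ℝ) 1 \ {negaVal m q d}] (negaVal m q d)) atTop ∧
    ¬ Tendsto (fun y => (G y - G (negaVal m q d)) / (y - negaVal m q d))
        (𝓝[Set.Icc (0 : ℝ) 1 \ {negaVal m q d}] (negaVal m q d)) atBot :=
  stmt14_general m q p hq1 hq2 hq4 hp1 hp2 hp3 halt hlim G hG d hd n hn hdn htail
end
end

section
/- Each nega-Q̃-rational number has exactly two distinct nega-Q̃-representations: Δ^{−Q̃}_{i₁...i_{n-1} i_n m_{n+1} 0 m_{n+3} 0 m_{n+5}...} = Δ^{−Q̃}_{i₁...i_{n-1} (i_n−1) 0 m_{n+2} 0 m_{n+4}...} for i_n ≠ 0; i.e., the two series of type (nega-Q̃) evaluated at these digit sequences give the same real number. -/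
open Finset Filter Topology MeasureTheory

noncomputable section

/-- The twisted digit sequence. -/
def twd (m : ℕ → ℕ) (d : ℕ → ℕ) (t : ℕ) : ℕ := if Odd t then d t else m t - d t

lemma twd_valid (m : ℕ → ℕ) (d : ℕ → ℕ) (hd : ValidDigits m d) :
    ValidDigits m (twd m d) := by
  intro t; unfold twd; split
  · exact hd t
  · omega

lemma tw_eq_twd (m : ℕ → ℕ) (f : ℕ → ℕ → ℝ) (d : ℕ → ℕ) (t : ℕ) :
    tw m f t (d t) = f t (twd m d t) := by
  unfold tw twd; split <;> rfl

lemma rowSum_nonneg (m : ℕ → ℕ) (q : ℕ → ℕ → ℝ)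
    (hq1 : ∀ n i, i ≤ m n → 0 < q n i) (t k : ℕ) (hk : k ≤ m t + 1) :
    0 ≤ rowSum q t k :=
  Finset.sum_nonneg fun i hi =>
    (hq1 t i (by simp only [Finset.mem_range] at hi; omega)).le

lemma rowSum_succ (q : ℕ → ℕ → ℝ) (t k : ℕ) :
    rowSum q t (k + 1) = rowSum q t k + q t k :=
  Finset.sum_range_succ _ _

lemma rowSum_top (m : ℕ → ℕ) (q : ℕ → ℕ → ℝ)
    (hq2 : ∀ n, ∑ i ∈ Finset.range (m n + 1), q n i = 1) (t : ℕ) :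
    rowSum q t (m t) = 1 - q t (m t) := by
  have h := hq2 t
  rw [Finset.sum_range_succ] at h
  unfold rowSum; linarith

/-- Value of a "dead-tail" expansion. -/
lemma dead_val (m : ℕ → ℕ) (q : ℕ → ℕ → ℝ) (d : ℕ → ℕ) (n : ℕ)
    (hdead : ∀ k, n < k → tw m (rowSum q) k (d k) = 0) :
    negaVal m q d =
      ∑ j ∈ Finset.range n,
        tw m (rowSum q) (j + 1) (d (j + 1)) * ∏ t ∈ Finset.Icc 1 j, tw m q t (d t) := by
  unfold negaVal negaShift
  simp only [zero_add]
  exact tsum_eq_sum fun j hj => by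
    rw [hdead (j + 1) (by simp only [Finset.mem_range, not_lt] at hj; omega), zero_mul]

/-- Value of a "live-tail" expansion. -/
lemma live_val (m : ℕ → ℕ) (q : ℕ → ℕ → ℝ)
    (hq1 : ∀ n i, i ≤ m n → 0 < q n i)
    (d : ℕ → ℕ) (hd : ValidDigits m d) (n : ℕ)
    (hlive : ∀ k, n < k → tw m (rowSum q) k (d k) = 1 - tw m q k (d k))
    (hlim : Tendsto (fun N => ∏ t ∈ Finset.Icc 1 N, tw m q t (d t)) atTop (𝓝 0)) :
    negaVal m q d =
      (∑ j ∈ Finset.range n,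
        tw m (rowSum q) (j + 1) (d (j + 1)) * ∏ t ∈ Finset.Icc 1 j, tw m q t (d t))
      + ∏ t ∈ Finset.Icc 1 n, tw m q t (d t) := by
  have key : HasSum
      (fun j => tw m (rowSum q) (j + 1) (d (j + 1)) * ∏ t ∈ Finset.Icc 1 j, tw m q t (d t))
      ((∑ j ∈ Finset.range n,
        tw m (rowSum q) (j + 1) (d (j + 1)) * ∏ t ∈ Finset.Icc 1 j, tw m q t (d t))
      + ∏ t ∈ Finset.Icc 1 n, tw m q t (d t)) := by
    set p : ℕ → ℝ := fun N => ∏ t ∈ Finset.Icc 1 N, tw m q t (d t) with hp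
    set g : ℕ → ℝ := fun j => tw m (rowSum q) (j + 1) (d (j + 1)) * p j with hg
    have hppos : ∀ N, 0 < p N := by
      intro N
      refine Finset.prod_pos fun t _ => ?_
      rw [tw_eq_twd]
      exact hq1 t _ (twd_valid m d hd t)
    have hbnonneg : ∀ k, 0 ≤ tw m (rowSum q) k (d k) := by
      intro k
      rw [tw_eq_twd]
      exact rowSum_nonneg m q hq1 k _ (by have := twd_valid m d hd k; omega)
    have hgnn : ∀ j, 0 ≤ g j := fun j => mul_nonneg (hbnonneg (j + 1)) (hppos j).le
    have hstep : ∀ j, n ≤ j → g j = p j - p (j + 1) := by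
      intro j hj
      have h1 : p (j + 1) = p j * tw m q (j + 1) (d (j + 1)) :=
        Finset.prod_Icc_succ_top (by omega) _
      simp only [hg]
      rw [hlive (j + 1) (by omega), h1]; ring
    have hIco : ∀ N, n ≤ N → ∑ j ∈ Finset.Ico n N, g j = p n - p N := by
      intro N hN
      induction N, hN using Nat.le_induction with
      | base => simp
      | succ N hN ih =>
        rw [Finset.sum_Ico_succ_top hN, ih, hstep N hN]; ring
    have hpart : ∀ N, n ≤ N →
        ∑ j ∈ Finset.range N, g j = (∑ j ∈ Finset.range n, g j) + (p n - p N) := by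
      intro N hN
      rw [← Finset.sum_range_add_sum_Ico g hN, hIco N hN]
    have hlim2 : Tendsto (fun N => ∑ j ∈ Finset.range N, g j) atTop
        (𝓝 ((∑ j ∈ Finset.range n, g j) + p n)) := by
      have h0 : Tendsto (fun N => (∑ j ∈ Finset.range n, g j) + (p n - p N)) atTop
          (𝓝 ((∑ j ∈ Finset.range n, g j) + (p n - 0))) :=
        tendsto_const_nhds.add (tendsto_const_nhds.sub hlim)
      rw [sub_zero] at h0
      exact h0.congr'
        (by filter_upwards [eventually_ge_atTop n] with N hN using (hpart N hN).symm)
    have hsum : Summable g := by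
      apply summable_of_sum_range_le hgnn (c := (∑ j ∈ Finset.range n, g j) + p n)
      intro N
      rcases le_or_gt N n with h | h
      · calc ∑ j ∈ Finset.range N, g j ≤ ∑ j ∈ Finset.range n, g j :=
              Finset.sum_le_sum_of_subset_of_nonneg (Finset.range_subset_range.2 h)
                (fun i _ _ => hgnn i)
          _ ≤ _ := le_add_of_nonneg_right (hppos n).le
      · rw [hpart N h.le]
        have := (hppos N).le
        linarith
    have heq := tendsto_nhds_unique hsum.hasSum.tendsto_sum_nat hlim2
    rw [← heq]
    exact hsum.hasSum
  unfold negaVal negaShift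
  simp only [zero_add]
  exact key.tsum_eq

/-- each nega-`Q̃`-rational number has two distinct nega-`Q̃`-representations:
the two digit sequences `c₁…c_{n−1} c_n m_{n+1} 0 m_{n+3} 0 …` and
`c₁…c_{n−1} (c_n−1) 0 m_{n+2} 0 m_{n+4} …` give the same real number. -/
theorem stmt17 (m : ℕ → ℕ) (q : ℕ → ℕ → ℝ)
    (hq1 : ∀ n i, i ≤ m n → 0 < q n i)
    (hq2 : ∀ n, ∑ i ∈ Finset.range (m n + 1), q n i = 1)
    (hq4 : ∀ d, ValidDigits m d →
      Tendsto (fun N => ∏ j ∈ Finset.Icc 1 N, q j (d j)) atTop (𝓝 0))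
    (c : ℕ → ℕ) (hc : ValidDigits m c) (n : ℕ) (hn : 1 ≤ n) (hcn : c n ≠ 0) :
    negaVal m q (fun k => if k ≤ n then c k else if Odd (k - n) then m k else 0) =
      negaVal m q (fun k => if k < n then c k else if k = n then c n - 1 else
        if Odd (k - n) then 0 else m k) := by
  obtain ⟨n', rfl⟩ : ∃ n', n = n' + 1 := ⟨n - 1, by omega⟩
  set n := n' + 1 with hnn
  set dA : ℕ → ℕ := fun k => if k ≤ n then c k else if Odd (k - n) then m k else 0 with hdA
  set dB : ℕ → ℕ := fun k => if k < n then c k else if k = n then c n - 1 else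
      if Odd (k - n) then 0 else m k with hdB
  have hA : ValidDigits m dA := by
    intro k; simp only [hdA]
    split
    · exact hc k
    · split <;> omega
  have hB : ValidDigits m dB := by
    intro k; simp only [hdB]
    split_ifs with h1 h2 h3
    · exact hc k
    · subst h2; have := hc n; omega
    · omega
    · omega
  have hAk : ∀ k, k ≤ n → dA k = c k := fun k hk => if_pos hk
  have hBk : ∀ k, k < n → dB k = c k := fun k hk => if_pos hk
  have hBn : dB n = c n - 1 := by simp [hdB]
  have hAtail : ∀ k, n < k → dA k = if Odd (k - n) then m k else 0 := by
    intro k hk; simp only [hdA]; rw [if_neg (by omega)]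
  have hBtail : ∀ k, n < k → dB k = if Odd (k - n) then 0 else m k := by
    intro k hk; simp only [hdB]; rw [if_neg (by omega), if_neg (by omega)]
  have hprod : ∀ j, j < n →
      (∏ t ∈ Finset.Icc 1 j, tw m q t (dA t)) = ∏ t ∈ Finset.Icc 1 j, tw m q t (dB t) := by
    intro j hj
    refine Finset.prod_congr rfl fun t ht => ?_
    simp only [Finset.mem_Icc] at ht
    rw [hAk t (by omega), hBk t (by omega)]
  have hlimA : Tendsto (fun N => ∏ t ∈ Finset.Icc 1 N, tw m q t (dA t)) atTop (𝓝 0) := by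
    refine (hq4 (twd m dA) (twd_valid m dA hA)).congr fun N => ?_
    exact Finset.prod_congr rfl fun t _ => (tw_eq_twd m q dA t).symm
  have hlimB : Tendsto (fun N => ∏ t ∈ Finset.Icc 1 N, tw m q t (dB t)) atTop (𝓝 0) := by
    refine (hq4 (twd m dB) (twd_valid m dB hB)).congr fun N => ?_
    exact Finset.prod_congr rfl fun t _ => (tw_eq_twd m q dB t).symm
  have hsums : (∑ j ∈ Finset.range n',
        tw m (rowSum q) (j + 1) (dA (j + 1)) * ∏ t ∈ Finset.Icc 1 j, tw m q t (dA t))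
      = ∑ j ∈ Finset.range n',
        tw m (rowSum q) (j + 1) (dB (j + 1)) * ∏ t ∈ Finset.Icc 1 j, tw m q t (dB t) := by
    refine Finset.sum_congr rfl fun j hj => ?_
    simp only [Finset.mem_range] at hj
    rw [hAk (j + 1) (by omega), hBk (j + 1) (by omega), hprod j (by omega)]
  rcases Nat.even_or_odd n with hne | hno
  · -- n even : A is live, B is dead
    have hno' : ¬ Odd n := by rw [Nat.even_iff] at hne; rw [Nat.odd_iff]; omega
    have hdeadB : ∀ k, n < k → tw m (rowSum q) k (dB k) = 0 := by
      intro k hk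
      rw [hBtail k hk]
      by_cases ho : Odd (k - n)
      · have hko : Odd k := by
          rw [Nat.odd_iff] at ho ⊢; rw [Nat.even_iff] at hne; omega
        rw [if_pos ho]; unfold tw; rw [if_pos hko]
        simp [rowSum]
      · have hke : ¬ Odd k := by
          rw [Nat.odd_iff] at ho ⊢; rw [Nat.even_iff] at hne; omega
        rw [if_neg ho]; unfold tw; rw [if_neg hke]
        simp [rowSum]
    have hliveA : ∀ k, n < k → tw m (rowSum q) k (dA k) = 1 - tw m q k (dA k) := by
      intro k hk
      rw [hAtail k hk]
      by_cases ho : Odd (k - n)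
      · have hko : Odd k := by
          rw [Nat.odd_iff] at ho ⊢; rw [Nat.even_iff] at hne; omega
        rw [if_pos ho]; unfold tw; rw [if_pos hko, if_pos hko]
        exact rowSum_top m q hq2 k
      · have hke : ¬ Odd k := by
          rw [Nat.odd_iff] at ho ⊢; rw [Nat.even_iff] at hne; omega
        rw [if_neg ho]; unfold tw; rw [if_neg hke, if_neg hke, Nat.sub_zero]
        exact rowSum_top m q hq2 k
    have hkey : tw m (rowSum q) n (c n) + tw m q n (c n) = tw m (rowSum q) n (c n - 1) := by
      unfold tw
      rw [if_neg hno', if_neg hno', if_neg hno']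
      have h1 : m n - (c n - 1) = (m n - c n) + 1 := by have := hc n; omega
      rw [h1, rowSum_succ]
    rw [live_val m q hq1 dA hA n hliveA hlimA, dead_val m q dB n hdeadB]
    rw [Finset.sum_range_succ, Finset.sum_range_succ,
      Finset.prod_Icc_succ_top (by omega : 1 ≤ n' + 1), hsums,
      hAk (n' + 1) le_rfl, hBn, hprod n' (by omega)]
    rw [← hnn]
    rw [← hkey]
    ring
  · -- n odd : A is dead, B is live
    have hdeadA : ∀ k, n < k → tw m (rowSum q) k (dA k) = 0 := by
      intro k hk
      rw [hAtail k hk]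
      by_cases ho : Odd (k - n)
      · have hke : ¬ Odd k := by rw [Nat.odd_iff] at ho hno ⊢; omega
        rw [if_pos ho]; unfold tw; rw [if_neg hke]
        simp [rowSum]
      · have hko : Odd k := by rw [Nat.odd_iff] at ho hno ⊢; omega
        rw [if_neg ho]; unfold tw; rw [if_pos hko]
        simp [rowSum]
    have hliveB : ∀ k, n < k → tw m (rowSum q) k (dB k) = 1 - tw m q k (dB k) := by
      intro k hk
      rw [hBtail k hk]
      by_cases ho : Odd (k - n)
      · have hke : ¬ Odd k := by rw [Nat.odd_iff] at ho hno ⊢; omega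
        rw [if_pos ho]; unfold tw; rw [if_neg hke, if_neg hke, Nat.sub_zero]
        exact rowSum_top m q hq2 k
      · have hko : Odd k := by rw [Nat.odd_iff] at ho hno ⊢; omega
        rw [if_neg ho]; unfold tw; rw [if_pos hko, if_pos hko]
        exact rowSum_top m q hq2 k
    have hkey : tw m (rowSum q) n (c n) = tw m (rowSum q) n (c n - 1) + tw m q n (c n - 1) := by
      unfold tw
      rw [if_pos hno, if_pos hno, if_pos hno]
      have h1 : c n = (c n - 1) + 1 := by omega
      conv_lhs => rw [h1]
      rw [rowSum_succ]
    rw [dead_val m q dA n hdeadA, live_val m q hq1 dB hB n hliveB hlimB]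
    rw [Finset.sum_range_succ, Finset.sum_range_succ,
      Finset.prod_Icc_succ_top (by omega : 1 ≤ n' + 1), hsums,
      hAk (n' + 1) le_rfl, hBn, hprod n' (by omega)]
    rw [← hnn]
    rw [hkey]
    ring
end
end
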